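/- Let {K_k} be a finite set of real 2×2 matrices with Σ_k K_k†K_k = I, and let |ψ⟩ ∈ ℂ² be a unit vector. Set p_k = ‖K_k|ψ⟩‖² and, for p_k > 0, |φ_k⟩ = K_k|ψ⟩/√p_k. Then Σ_k p_k τ(|φ_k⟩) ≤ τ(|ψ⟩), where τ(|φ⟩) = 1 − |⟨φ*|φ⟩| and |φ*⟩ is the componentwise complex conjugate. -/

import Mathlib

/-!
A real Kraus family `K` with `∑ Kᵀ K = 1` preserves the *bilinear* form `a ⬝ᵥ b` in the sense that
`∑ₖ (Kₖ a) ⬝ᵥ (Kₖ b) = a ⬝ᵥ b`, and since `Kₖ` is real, `Kₖ ψ*` is `(Kₖ ψ)*`. Taking `a = ψ*` gives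
`∑ₖ pₖ = ‖ψ‖² = 1`, taking `a = ψ` gives `∑ₖ ⟨(Kₖψ)*|Kₖψ⟩ = ⟨ψ*|ψ⟩`. As `pₖ τ(φₖ) = pₖ - |⟨(Kₖψ)*|Kₖψ⟩|`,
the claim is the triangle inequality for this sum.
-/

open Complex Matrix

/-- The time-reversal frameness monotone `τ(φ) = 1 - |⟨φ*|φ⟩| = 1 - |φ₀² + φ₁²|`. -/
noncomputable def tau (φ : Fin 2 → ℂ) : ℝ := 1 - ‖φ 0 ^ 2 + φ 1 ^ 2‖

namespace Matrix

variable {ι m n R : Type*} [Fintype ι] [Fintype m] [Fintype n] [DecidableEq n] [CommRing R]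

theorem sum_mulVec_dotProduct_mulVec_of_sum_transpose_mul_eq_one {M : ι → Matrix m n R}
    (hM : ∑ k, (M k)ᵀ * M k = 1) (a b : n → R) :
    ∑ k, (M k *ᵥ a) ⬝ᵥ (M k *ᵥ b) = a ⬝ᵥ b := by
  calc ∑ k, (M k *ᵥ a) ⬝ᵥ (M k *ᵥ b) = ∑ k, a ⬝ᵥ ((M k)ᵀ * M k) *ᵥ b :=
        Finset.sum_congr rfl fun k _ => by
          rw [← vecMul_transpose, ← dotProduct_mulVec, mulVec_mulVec]
    _ = a ⬝ᵥ b := by rw [← dotProduct_sum, ← sum_mulVec, hM, one_mulVec]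

theorem sum_transpose_mul_map_eq_one {S : Type*} [CommRing S] (f : R →+* S)
    {M : ι → Matrix m n R} (hM : ∑ k, (M k)ᵀ * M k = 1) :
    ∑ k, ((M k).map f)ᵀ * (M k).map f = 1 := by
  have := congrArg f.mapMatrix hM
  simpa [map_sum, RingHom.mapMatrix_apply, transpose_map, Matrix.map_mul] using this

end Matrix

theorem star_map_ofReal_mulVec {m n : Type*} [Fintype n] (K : Matrix m n ℝ) (v : n → ℂ) :
    star (K.map ofReal *ᵥ v) = K.map ofReal *ᵥ star v := by
  ext i
  simp [mulVec, dotProduct, conj_ofReal]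

theorem star_dotProduct_self_eq_sum_norm_sq {n : Type*} [Fintype n] (v : n → ℂ) :
    star v ⬝ᵥ v = ((∑ i, ‖v i‖ ^ 2 : ℝ) : ℂ) := by
  simp [dotProduct, Complex.conj_mul']

theorem dotProduct_self_fin_two {R : Type*} [CommSemiring R] (v : Fin 2 → R) :
    v ⬝ᵥ v = v 0 ^ 2 + v 1 ^ 2 := by
  simp [dotProduct, Fin.sum_univ_two, sq]

theorem norm_sq_add_sq_le_sum_norm_sq (v : Fin 2 → ℂ) :
    ‖v 0 ^ 2 + v 1 ^ 2‖ ≤ ∑ i, ‖v i‖ ^ 2 := by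
  rw [Fin.sum_univ_two, ← norm_pow, ← norm_pow]
  exact norm_add_le _ _

theorem tau_smul (c : ℝ) (v : Fin 2 → ℂ) : tau (c • v) = 1 - c ^ 2 * ‖v 0 ^ 2 + v 1 ^ 2‖ := by
  simp only [tau, Pi.smul_apply, Complex.real_smul, mul_pow, ← ofReal_pow, ← mul_add, norm_mul,
    norm_real, Real.norm_eq_abs, abs_sq]

theorem sum_norm_sq_mul_tau_normalize (v : Fin 2 → ℂ) :
    (∑ i, ‖v i‖ ^ 2) * tau ((Real.sqrt (∑ i, ‖v i‖ ^ 2))⁻¹ • v)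
      = (∑ i, ‖v i‖ ^ 2) - ‖v 0 ^ 2 + v 1 ^ 2‖ := by
  set p := ∑ i, ‖v i‖ ^ 2
  have hp : 0 ≤ p := by positivity
  rw [tau_smul, inv_pow, Real.sq_sqrt hp]
  -- for `p = 0` the junk value `(√0)⁻¹ = 0` is harmless, because then `v = 0`
  rcases hp.eq_or_lt with hp0 | hp0
  · have : ‖v 0 ^ 2 + v 1 ^ 2‖ = 0 :=
      le_antisymm (hp0 ▸ norm_sq_add_sq_le_sum_norm_sq v) (norm_nonneg _)
    simp [← hp0, this]
  · field_simp

theorem tau_ensemble_monotone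
    {N : ℕ} (K : Fin N → Matrix (Fin 2) (Fin 2) ℝ)
    (hK : ∑ k, (K k)ᵀ * K k = 1)
    (ψ : Fin 2 → ℂ) (hψ : ∑ i, ‖ψ i‖ ^ 2 = 1) :
    ∑ k, (∑ i, ‖((K k).map Complex.ofReal).mulVec ψ i‖ ^ 2) *
        tau ((Real.sqrt (∑ i, ‖((K k).map Complex.ofReal).mulVec ψ i‖ ^ 2))⁻¹
              • ((K k).map Complex.ofReal).mulVec ψ)
      ≤ tau ψ := by
  have hM : ∑ k, ((K k).map ofReal)ᵀ * (K k).map ofReal = 1 :=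
    sum_transpose_mul_map_eq_one ofRealHom hK
  have hp : ∑ k, ∑ i, ‖((K k).map ofReal *ᵥ ψ) i‖ ^ 2 = 1 := by
    simpa only [← star_map_ofReal_mulVec, star_dotProduct_self_eq_sum_norm_sq, ← ofReal_sum,
      ofReal_inj, hψ]
      using sum_mulVec_dotProduct_mulVec_of_sum_transpose_mul_eq_one hM (star ψ) ψ
  have hq := sum_mulVec_dotProduct_mulVec_of_sum_transpose_mul_eq_one hM ψ ψ
  simp only [dotProduct_self_fin_two] at hq
  calc _ = ∑ k, ((∑ i, ‖((K k).map ofReal *ᵥ ψ) i‖ ^ 2)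
            - ‖((K k).map ofReal *ᵥ ψ) 0 ^ 2 + ((K k).map ofReal *ᵥ ψ) 1 ^ 2‖) :=
        Finset.sum_congr rfl fun k _ => sum_norm_sq_mul_tau_normalize _
    _ = 1 - ∑ k, ‖((K k).map ofReal *ᵥ ψ) 0 ^ 2 + ((K k).map ofReal *ᵥ ψ) 1 ^ 2‖ := by
        rw [Finset.sum_sub_distrib, hp]
    _ ≤ 1 - ‖ψ 0 ^ 2 + ψ 1 ^ 2‖ := by
        rw [← hq]
        exact sub_le_sub_left (norm_sum_le _ _) 1
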